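/- Let p be a prime, let S be a finite commutative semigroup such that exp(S) is a power of p, and let R be a commutative unitary ring of characteristic p. Then d(S,R) ≤ Λ(S) − 1. -/

import Mathlib

/-!
Write `f_s = X^s - X^{e(s)}`. Since `e(x + y) = e(x) + e(y)`, we have
`f_{x+y} = X^x f_y + X^{e(y)} f_x`, so for a generating set `A` every `f_s` lies in the ideal `J`
spanned by the `f_a`, `a ∈ A`. Splitting along the idempotent `X^{e(a)}`, the power `f_a^{ρ(a)}`
equals `(X^{a+e(a)} - X^{e(a)})^{ρ(a)}`; the period `π(a)` of `a` divides `exp(S)`, so it is a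
power of `p`, is at most `ρ(a)`, and `X^{a+e(a)}` has order `π(a)` in the group with identity
`X^{e(a)}`, so Frobenius gives `f_a^{ρ(a)} = 0`. Hence `J^{1 + Σ (ρ(a) - 1)} = 0`, and for `A`
realising `Λ(S)` every product of `Λ(S)` factors `f_{s_i}` (all `a_i = 1`) vanishes.
-/

namespace ZS

variable (S : Type*) [AddCommSemigroup S]

/-- `nsmul' n x = (n+1)·x`, iterated addition in a semigroup. -/
def nsmul' : ℕ → S → S
  | 0, x => x
  | n + 1, x => x + nsmul' n x

/-- The cyclic subsemigroup `⟨x⟩ = {x, 2x, 3x, …}` generated by `x`. -/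
def cyc (x : S) : Set S := Set.range fun n => nsmul' S n x

/-- `x` is periodic if `⟨x⟩` is finite. -/
def IsPeriodicElem (x : S) : Prop := (cyc S x).Finite

/-- A semigroup is periodic if every element is periodic. -/
def IsPeriodicSemigroup : Prop := ∀ x : S, IsPeriodicElem S x

/-- `ρ(x)`: the least `m ≥ 1` such that `m·x` is idempotent (equivalently `m·x = e(x)`). -/
noncomputable def rho (x : S) : ℕ :=
  sInf {n : ℕ | nsmul' S n x + nsmul' S n x = nsmul' S n x} + 1

/-- `e(x)`: the unique idempotent of the finite cyclic semigroup `⟨x⟩`. -/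
noncomputable def eIdem (x : S) : S :=
  nsmul' S (sInf {n : ℕ | nsmul' S n x + nsmul' S n x = nsmul' S n x}) x

/-- The period of a (periodic) element `x`: the least `n > 0` with `(m+n)x = mx` for some `m`. -/
noncomputable def period (x : S) : ℕ :=
  sInf {n : ℕ | 0 < n ∧ ∃ m : ℕ, nsmul' S (m + n) x = nsmul' S m x}

/-- The index of a (periodic) element `x`: the least `k ≥ 1` with `kx = tx` for some `t ≠ k`. -/
noncomputable def indexOf (x : S) : ℕ :=
  sInf {k : ℕ | ∃ t : ℕ, t ≠ k ∧ nsmul' S k x = nsmul' S t x} + 1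

/-- `exp(S)`: the lcm of the periods of the elements of `S`, described as the least positive
common multiple of all the periods. -/
noncomputable def expS : ℕ := sInf {n : ℕ | 0 < n ∧ ∀ x : S, period S x ∣ n}

/-- `K` is a splitting field for exponent `n`: it contains exactly `n` `n`-th roots of unity. -/
def SplitField (K : Type*) [Field K] (n : ℕ) : Prop := Set.ncard {ζ : K | ζ ^ n = 1} = n

/-- Green's preorder `a ≼_𝓗 b`. -/
def gLe (a b : S) : Prop := a = b ∨ ∃ c : S, a = b + c

/-- Green's congruence `a 𝓗 b`. -/
def gEq (a b : S) : Prop := gLe S a b ∧ gLe S b a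

/-- `a ≺_𝓗 b`. -/
def gLt (a b : S) : Prop := gLe S a b ∧ ¬ gLe S b a

/-- The Green class `H_a`. -/
def HClass (a : S) : Set S := {x : S | gEq S x a}

/-- The stabilizer `St(H_a)` of the Green class of `a`. -/
def stab (a : S) : Set S := {c : S | ∀ x ∈ HClass S a, c + x ∈ HClass S a}

theorem gLe_trans {a b c : S} (h1 : gLe S a b) (h2 : gLe S b c) : gLe S a c := by
  rcases h1 with rfl | ⟨u, rfl⟩
  · exact h2
  · rcases h2 with rfl | ⟨v, rfl⟩
    · exact Or.inr ⟨u, rfl⟩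
    · exact Or.inr ⟨v + u, by rw [add_assoc]⟩

theorem gLe_add_right {a b : S} (x : S) (h : gLe S a b) : gLe S (a + x) (b + x) := by
  rcases h with rfl | ⟨c, rfl⟩
  · exact Or.inl rfl
  · exact Or.inr ⟨c, by rw [add_right_comm]⟩

theorem gEq_add {w x y z : S} (h1 : gEq S w x) (h2 : gEq S y z) : gEq S (w + y) (x + z) := by
  have k1 : gLe S (w + y) (x + y) := gLe_add_right S y h1.1
  have k2 : gLe S (x + y) (x + z) := by
    have h := gLe_add_right S x h2.1
    rwa [add_comm z x, add_comm y x] at h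
  have k3 : gLe S (x + z) (w + z) := gLe_add_right S z h1.2
  have k4 : gLe S (w + z) (w + y) := by
    have h := gLe_add_right S w h2.2
    rwa [add_comm z w, add_comm y w] at h
  exact ⟨gLe_trans S k1 k2, gLe_trans S k3 k4⟩

/-- Green's congruence as an additive congruence. -/
def greenCon : AddCon S where
  r a b := gEq S a b
  iseqv := ⟨fun _ => ⟨Or.inl rfl, Or.inl rfl⟩, fun h => ⟨h.2, h.1⟩,
    fun h1 h2 => ⟨gLe_trans S h1.1 h2.1, gLe_trans S h2.2 h1.2⟩⟩
  add' h1 h2 := gEq_add S h1 h2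

/-- The quotient semigroup `S/𝓗`. -/
abbrev GQuot := (greenCon S).Quotient

/-- The canonical epimorphism `S → S/𝓗`, `a ↦ ā`. -/
def gq (a : S) : GQuot S := (a : (greenCon S).Quotient)

/-- The sum of a sequence (multiset) of elements of `S`, computed in `WithZero S`
(the empty sequence having sum the adjoined zero). -/
def msum (T : Multiset S) : WithZero S := (T.map fun x => (x : WithZero S)).sum

/-- A sequence over a commutative semigroup is (additively) reducible if some proper
(possibly empty) subsequence has the same sum; the empty sequence has sum the identity of `S`,
when `S` has one. -/
def IsReducible (T : Multiset S) : Prop :=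
  (∃ T' : Multiset S, T' ≤ T ∧ T' ≠ T ∧ T' ≠ 0 ∧ msum S T' = msum S T) ∨
    (T ≠ 0 ∧ ∃ z : S, msum S T = ↑z ∧ ∀ s : S, z + s = s)

/-- The Davenport constant `D(S)` of a commutative semigroup. -/
noncomputable def Dav : ℕ∞ :=
  sInf {n : ℕ∞ | ∀ T : Multiset S, (T.card : ℕ∞) ≥ n → IsReducible S T}

/-- The relative Davenport constant `D_a(S)`: the largest length of an additively
irreducible sequence with sum `a`. -/
noncomputable def Drel (a : S) : ℕ∞ :=
  sSup {n : ℕ∞ | ∃ T : Multiset S,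
    T ≠ 0 ∧ ¬ IsReducible S T ∧ msum S T = ↑a ∧ n = (T.card : ℕ∞)}

/-- The Erdős–Burgess constant `I(S)`: the smallest `ℓ` such that every sequence over `S` of
length (at least) `ℓ` has a nonempty subsequence with idempotent sum. -/
noncomputable def EB : ℕ∞ :=
  sInf {n : ℕ∞ | ∀ T : Multiset S, (T.card : ℕ∞) ≥ n →
    ∃ T' : Multiset S, T' ≤ T ∧ T' ≠ 0 ∧ ∃ x : S, msum S T' = ↑x ∧ x + x = x}

/-- The Davenport constant of a (semigroup which is a) group: the smallest `ℓ` such that every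
sequence of length (at least) `ℓ` has a nonempty subsequence whose sum is the identity element. -/
noncomputable def DavGrpSet : ℕ∞ :=
  sInf {n : ℕ∞ | ∀ T : Multiset S, (T.card : ℕ∞) ≥ n →
    ∃ T' : Multiset S, T' ≤ T ∧ T' ≠ 0 ∧ ∃ z : S, msum S T' = ↑z ∧ ∀ x : S, z + x = x}

/-- The Davenport constant of a finite abelian group. -/
noncomputable def DavG (G : Type*) [AddCommMonoid G] : ℕ∞ :=
  sInf {n : ℕ∞ | ∀ T : Multiset G, (T.card : ℕ∞) ≥ n →
    ∃ T' : Multiset G, T' ≤ T ∧ T' ≠ 0 ∧ T'.sum = 0}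

/-- `ψ(a)`: the largest length of a strictly ascending chain of principal ideals starting at
`(a)`. -/
noncomputable def psi (a : S) : ℕ∞ :=
  sSup {n : ℕ∞ | ∃ ℓ : ℕ, n = (ℓ : ℕ∞) ∧
    ∃ c : ℕ → S, c 0 = a ∧ ∀ i < ℓ, gLt S (c i) (c (i + 1))}

/-- `Ψ(S)`: the largest length of a strictly ascending chain of principal ideals of `S`. -/
noncomputable def PsiS : ℕ∞ := ⨆ a : S, psi S a

/-- A subset of a semigroup which is a subgroup: closed under addition, with an identity
and inverses. -/
def IsSubgroupSet (T : Set S) : Prop :=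
  (∀ x ∈ T, ∀ y ∈ T, x + y ∈ T) ∧
    ∃ z ∈ T, (∀ x ∈ T, z + x = x) ∧ ∀ x ∈ T, ∃ y ∈ T, x + y = z

open Classical in
/-- `ε_a`: `0` if `⟨a⟩` is a group, `1` otherwise. -/
noncomputable def eps (a : S) : ℕ∞ := if IsSubgroupSet S (cyc S a) then 0 else 1

/-- The Schützenberger maps on the Green class `H_a`: maps `x ↦ c + x` for `c ∈ St(H_a)`. -/
def GammaSet (a : S) : Set (↥(HClass S a) → ↥(HClass S a)) :=
  {f | ∃ c ∈ stab S a, ∀ x : ↥(HClass S a), (↑(f x) : S) = c + ↑x}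

/-- The Schützenberger group `Γ(H_a)` (as a type; it is empty when `St(H_a) = ∅`). -/
def Gamma (a : S) : Type _ := ↥(GammaSet S a)

instance (a : S) : Add (Gamma S a) :=
  ⟨fun f g => ⟨f.1 ∘ g.1, by
    obtain ⟨c, hc, hfc⟩ := f.2
    obtain ⟨d, hd, hgd⟩ := g.2
    refine ⟨c + d, fun x hx => by rw [add_assoc]; exact hc _ (hd x hx), fun x => ?_⟩
    show (↑(f.1 (g.1 x)) : S) = c + d + ↑x
    rw [hfc (g.1 x), hgd x, add_assoc]⟩⟩

instance (a : S) : AddCommSemigroup (Gamma S a) where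
  add_assoc f g h := Subtype.ext rfl
  add_comm f g := by
    obtain ⟨c, hc, hfc⟩ := f.2
    obtain ⟨d, hd, hgd⟩ := g.2
    apply Subtype.ext
    funext x
    apply Subtype.ext
    show (↑(f.1 (g.1 x)) : S) = ↑(g.1 (f.1 x))
    rw [hfc (g.1 x), hgd x, hgd (f.1 x), hfc x, add_left_comm]

/-- `St(H_a)` as a subsemigroup of `S`. -/
def stabSub (a : S) : AddSubsemigroup S where
  carrier := stab S a
  add_mem' := fun {c d} hc hd x hx => by rw [add_assoc]; exact hc _ (hd x hx)

/-- The canonical surjection `π_a : St(H_a) → Γ(H_a)`, `c ↦ γ_c`. -/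
def gammaMap (a : S) (c : ↥(stabSub S a)) : Gamma S a :=
  ⟨fun x => ⟨(↑c : S) + ↑x, c.2 ↑x x.2⟩, ⟨↑c, c.2, fun _ => rfl⟩⟩

/-- The semigroup algebra `R[X;S]` of a commutative semigroup, realized inside the monoid
algebra of the monoid obtained from `S` by adjoining an identity element. -/
abbrev SAlg (R : Type*) [CommRing R] (S : Type*) [AddCommSemigroup S] :=
  AddMonoidAlgebra R (WithZero S)

/-- The monomial `r·X^s` of the semigroup algebra. -/
noncomputable def Xm (R : Type*) [CommRing R] {S : Type*} [AddCommSemigroup S] (s : S) (r : R) :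
    SAlg R S := AddMonoidAlgebra.single (↑s) r

/-- The factor `X^s - a·X^{e(s)}` of the semigroup algebra. -/
noncomputable def facX (R : Type*) [CommRing R] {S : Type*} [AddCommSemigroup S]
    (s : S) (a : R) : SAlg R S := Xm R s 1 - Xm R (eIdem S s) a

/-- The invariant `d(S,R)`: the supremum of all `ℓ` such that some sequence `s_1,…,s_ℓ` over
`S` satisfies `(X^{s_1} - a_1 X^{e(s_1)}) ⋯ (X^{s_ℓ} - a_ℓ X^{e(s_ℓ)}) ≠ 0` in `R[X;S]` for all
nonzero `a_1, …, a_ℓ ∈ R`. -/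
noncomputable def dd (R : Type*) [CommRing R] (S : Type*) [AddCommSemigroup S] : ℕ∞ :=
  sSup {n : ℕ∞ | ∃ ℓ : ℕ, n = (ℓ : ℕ∞) ∧ ∃ s : Fin ℓ → S,
    ∀ a : Fin ℓ → R, (∀ i, a i ≠ 0) → ∏ i, facX R (s i) (a i) ≠ 0}

/-- `Λ(S)`: the minimum over all generating sets `A` of `S` of `1 + Σ_{a∈A} (ρ(a)-1)`. -/
noncomputable def Lam (S : Type*) [AddCommSemigroup S] : ℕ :=
  sInf {n : ℕ | ∃ A : Finset S,
    AddSubsemigroup.closure (↑A : Set S) = ⊤ ∧ n = 1 + ∑ a ∈ A, (rho S a - 1)}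

/-- An elementary semigroup: an ideal extension of a nilsemigroup `N` by a group with zero
`G ∪ {∞}`. -/
def IsElementary : Prop :=
  ∃ G N : Set S, G ∪ N = Set.univ ∧ Disjoint G N ∧ IsSubgroupSet S G ∧
    (∀ x ∈ N, ∀ s : S, s + x ∈ N) ∧
    ∃ z ∈ N, (∀ s : S, s + z = z) ∧ ∀ x ∈ N, ∃ n : ℕ, nsmul' S n x = z

theorem exists_closure_eq_top_and_Lam_eq [Finite S] :
    ∃ A : Finset S, AddSubsemigroup.closure (A : Set S) = ⊤ ∧
      Lam S = 1 + ∑ a ∈ A, (rho S a - 1) :=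
  Nat.sInf_mem (s := {n | ∃ A : Finset S, AddSubsemigroup.closure (A : Set S) = ⊤ ∧
      n = 1 + ∑ a ∈ A, (rho S a - 1)}) ⟨_, Set.finite_univ.toFinset,
    by rw [Set.Finite.coe_toFinset, AddSubsemigroup.closure_univ], rfl⟩

section AddMonoid

variable {M : Type*} [AddMonoid M] {z : M}

theorem add_nsmul_eq_of_le {m π k : ℕ} (h : (m + π) • z = m • z) (hk : m ≤ k) :
    (k + π) • z = k • z := by
  obtain ⟨d, rfl⟩ := Nat.exists_eq_add_of_le hk
  rw [add_right_comm, add_nsmul, h, ← add_nsmul]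

theorem add_mul_nsmul_eq_of_le {m π k : ℕ} (h : (m + π) • z = m • z) (hk : m ≤ k) (j : ℕ) :
    (k + j * π) • z = k • z := by
  induction j with
  | zero => simp
  | succ j ih => rw [Nat.succ_mul, ← add_assoc, add_nsmul_eq_of_le h (by omega), ih]

theorem nsmul_eq_of_dvd {k n : ℕ} (h : k • z + k • z = k • z) (hkn : k ∣ n) (hn : n ≠ 0) :
    n • z = k • z := by
  obtain ⟨j, rfl⟩ := hkn
  obtain ⟨j, rfl⟩ := Nat.exists_eq_succ_of_ne_zero (right_ne_zero_of_mul hn)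
  clear hn
  induction j with
  | zero => simp
  | succ j ih => rw [Nat.mul_succ, add_nsmul, ih, h]

end AddMonoid

variable {S}

theorem coe_nsmul' (n : ℕ) (x : S) :
    ((nsmul' S n x : S) : WithZero S) = (n + 1) • (x : WithZero S) := by
  induction n with
  | zero => rw [zero_add, one_nsmul]; rfl
  | succ n ih => rw [nsmul', WithZero.coe_add, ih, succ_nsmul' _ (n + 1)]

theorem coe_eIdem (x : S) : (eIdem S x : WithZero S) = rho S x • (x : WithZero S) :=
  coe_nsmul' _ x

theorem rho_pos (x : S) : 0 < rho S x := Nat.succ_pos _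

theorem period_dvd_expS (h : expS S ≠ 0) (x : S) : period S x ∣ expS S :=
  (Nat.sInf_mem (Nat.nonempty_of_pos_sInf (Nat.pos_of_ne_zero h))).2 x

section Periodic

variable {x : S} (hx : 0 < period S x)
include hx

theorem exists_add_period_nsmul_eq :
    ∃ m, (m + period S x) • (x : WithZero S) = m • (x : WithZero S) := by
  obtain ⟨m, hm⟩ := (Nat.sInf_mem (Nat.nonempty_of_pos_sInf hx)).2
  exact ⟨m + 1, by rw [add_right_comm, ← coe_nsmul', ← coe_nsmul']; exact congrArg _ hm⟩

theorem eIdem_add_eIdem : eIdem S x + eIdem S x = eIdem S x := by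
  refine Nat.sInf_mem (s := {n | nsmul' S n x + nsmul' S n x = nsmul' S n x}) ?_
  obtain ⟨m, hm⟩ := exists_add_period_nsmul_eq hx
  obtain ⟨n, hn⟩ : ∃ n, (m + 1) * period S x = n + 1 :=
    Nat.exists_eq_add_of_le' (Nat.mul_pos m.succ_pos hx)
  refine ⟨n, WithZero.coe_injective ?_⟩
  have hm_le : m ≤ (m + 1) * period S x := le_trans m.le_succ (Nat.le_mul_of_pos_right _ hx)
  simp only [WithZero.coe_add, coe_nsmul', ← hn]
  rw [← add_nsmul, add_mul_nsmul_eq_of_le hm hm_le]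

theorem rho_nsmul_add_rho_nsmul :
    rho S x • (x : WithZero S) + rho S x • (x : WithZero S) = rho S x • (x : WithZero S) := by
  rw [← coe_eIdem, ← WithZero.coe_add, eIdem_add_eIdem hx]

theorem period_le_rho : period S x ≤ rho S x := by
  refine Nat.sInf_le ⟨rho_pos x, rho S x - 1, WithZero.coe_injective ?_⟩
  have hρ := rho_pos x
  rw [coe_nsmul', coe_nsmul', show rho S x - 1 + rho S x + 1 = rho S x + rho S x by omega,
    Nat.sub_add_cancel hρ, add_nsmul, rho_nsmul_add_rho_nsmul hx]

theorem period_nsmul_coe_add_eIdem :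
    period S x • ((x : WithZero S) + eIdem S x) = eIdem S x := by
  obtain ⟨m, hm⟩ := exists_add_period_nsmul_eq hx
  have hidem := rho_nsmul_add_rho_nsmul hx
  have hρ := rho_pos x
  have hm_le : m ≤ rho S x * (m + 1) := le_trans m.le_succ (Nat.le_mul_of_pos_left _ hρ)
  rw [coe_eIdem, nsmul_add, smul_smul,
    nsmul_eq_of_dvd hidem (dvd_mul_left _ _) (Nat.mul_pos hx hρ).ne',
    ← nsmul_eq_of_dvd hidem (dvd_mul_right _ (m + 1)) (Nat.mul_pos hρ m.succ_pos).ne',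
    ← add_nsmul, add_comm, add_nsmul_eq_of_le hm hm_le]

end Periodic

theorem eIdem_add {x y : S} (hx : 0 < period S x) (hy : 0 < period S y)
    (hxy : 0 < period S (x + y)) : eIdem S (x + y) = eIdem S x + eIdem S y := by
  apply WithZero.coe_injective
  have hN : rho S x * rho S y * rho S (x + y) ≠ 0 :=
    (Nat.mul_pos (Nat.mul_pos (rho_pos x) (rho_pos y)) (rho_pos _)).ne'
  rw [WithZero.coe_add, coe_eIdem, coe_eIdem, coe_eIdem,
    ← nsmul_eq_of_dvd (rho_nsmul_add_rho_nsmul hxy) (dvd_mul_left _ _) hN,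
    ← nsmul_eq_of_dvd (rho_nsmul_add_rho_nsmul hx) ((dvd_mul_right _ _).mul_right _) hN,
    ← nsmul_eq_of_dvd (rho_nsmul_add_rho_nsmul hy) ((dvd_mul_left _ _).mul_right _) hN,
    WithZero.coe_add, nsmul_add]

section CommRing

variable {R : Type*} [CommRing R]

theorem sup_pow_add_pred_le_pow_sup_pow (I J : Ideal R) (n m : ℕ) :
    (I ⊔ J) ^ (n + m - 1) ≤ I ^ n ⊔ J ^ m := by
  rw [← Ideal.add_eq_sup, ← Ideal.add_eq_sup, add_pow, Ideal.sum_eq_sup]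
  refine Finset.sup_le fun i hi => ?_
  by_cases hn : n ≤ i
  · exact Ideal.mul_le_left.trans (Ideal.mul_le_left.trans
      ((Ideal.pow_le_pow_right hn).trans le_sup_left))
  · refine Ideal.mul_le_left.trans (Ideal.mul_le_right.trans
      ((Ideal.pow_le_pow_right ?_).trans le_sup_right))
    have := Finset.mem_range.mp hi
    omega

theorem span_image_pow_eq_bot {ι : Type*} (f : ι → R) (ν : ι → ℕ) (B : Finset ι)
    (hf : ∀ b ∈ B, f b ^ (ν b + 1) = 0) :
    Ideal.span (f '' B) ^ (1 + ∑ b ∈ B, ν b) = ⊥ := by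
  classical
  induction B using Finset.induction_on with
  | empty => simp
  | insert b B hb ih =>
    rw [Finset.coe_insert, Set.image_insert_eq, Ideal.span_insert, sup_comm,
      Finset.sum_insert hb, eq_bot_iff]
    calc (Ideal.span (f '' B) ⊔ Ideal.span {f b}) ^ (1 + (ν b + ∑ x ∈ B, ν x))
        = (Ideal.span (f '' B) ⊔ Ideal.span {f b}) ^ ((1 + ∑ x ∈ B, ν x) + (ν b + 1) - 1) := by
          congr 1; omega
      _ ≤ Ideal.span (f '' B) ^ (1 + ∑ x ∈ B, ν x) ⊔ Ideal.span {f b} ^ (ν b + 1) :=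
          sup_pow_add_pred_le_pow_sup_pow _ _ _ _
      _ = ⊥ := by
          rw [ih fun x hx => hf x (Finset.mem_insert_of_mem hx), Ideal.span_singleton_pow,
            hf b (Finset.mem_insert_self b B)]
          simp

theorem prod_eq_zero_of_pow_eq_bot {ι : Type*} {I : Ideal R} {n : ℕ} (hI : I ^ n = ⊥)
    {s : Finset ι} (hs : n ≤ s.card) {g : ι → R} (hg : ∀ i ∈ s, g i ∈ I) :
    ∏ i ∈ s, g i = 0 := by
  have hmem : ∏ i ∈ s, g i ∈ I ^ s.card := by
    simpa only [Finset.prod_const] using Ideal.prod_mem_prod hg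
  simpa [hI] using Ideal.pow_le_pow_right hs hmem

theorem sub_pow_eq_zero_of_isIdempotentElem {p : ℕ} [ExpChar R p] {x e : R}
    (he : IsIdempotentElem e) {ρ u : ℕ} (hxρ : x ^ ρ = e) (hxe : (x * e) ^ p ^ u = e)
    (hle : p ^ u ≤ ρ) : (x - e) ^ ρ = 0 := by
  have hpu : p ^ u ≠ 0 := pow_ne_zero u (expChar_pos R p).ne'
  obtain ⟨k, rfl⟩ : ∃ k, ρ = k + 1 := Nat.exists_eq_add_of_le' (by omega)
  have hcompl : (x - e) ^ (k + 1) * (1 - e) = 0 := by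
    rw [← he.one_sub.pow_succ_eq k, ← mul_pow, sub_mul, he.mul_one_sub_self, sub_zero, mul_pow,
      hxρ, he.one_sub.pow_succ_eq, he.mul_one_sub_self]
  have hpart : (x - e) ^ (k + 1) * e = 0 := by
    calc (x - e) ^ (k + 1) * e = (x * e - e) ^ (k + 1) := by
          rw [show x * e - e = (x - e) * e by rw [sub_mul, he.eq], mul_pow, he.pow_succ_eq]
      _ = 0 := by
          refine pow_eq_zero_of_le hle ?_
          rw [sub_pow_expChar_pow, hxe, he.pow_eq hpu, sub_self]
  calc (x - e) ^ (k + 1) = (x - e) ^ (k + 1) * e + (x - e) ^ (k + 1) * (1 - e) := by ring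
    _ = 0 := by rw [hpart, hcompl, add_zero]

end CommRing

section SemigroupAlgebra

variable {R : Type*} [CommRing R]

theorem facX_add {x y : S} (he : eIdem S (x + y) = eIdem S x + eIdem S y) :
    facX R (x + y) 1 = Xm R x 1 * facX R y 1 + Xm R (eIdem S y) 1 * facX R x 1 := by
  simp only [facX, Xm, mul_sub, AddMonoidAlgebra.single_mul_single, ← WithZero.coe_add, mul_one,
    he, add_comm (eIdem S y) x, add_comm (eIdem S y) (eIdem S x)]
  abel

theorem facX_mem_span (hS : ∀ x : S, 0 < period S x) {A : Set S}
    (hA : AddSubsemigroup.closure A = ⊤) (s : S) :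
    facX R s 1 ∈ Ideal.span ((facX R · 1) '' A) := by
  have hs : s ∈ AddSubsemigroup.closure A := hA ▸ trivial
  induction hs using AddSubsemigroup.closure_induction with
  | mem x hx => exact Ideal.subset_span ⟨x, hx, rfl⟩
  | add x y _ _ hx hy =>
    rw [facX_add (eIdem_add (hS x) (hS y) (hS (x + y)))]
    exact add_mem (Ideal.mul_mem_left _ _ hy) (Ideal.mul_mem_left _ _ hx)

theorem facX_pow_rho_eq_zero (p : ℕ) [Fact p.Prime] [CharP R p] {x : S} {u : ℕ}
    (hx : period S x = p ^ u) : facX R x 1 ^ rho S x = 0 := by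
  have := charP_of_injective_algebraMap' R (A := SAlg R S) p
  have hpos : 0 < period S x := hx ▸ pow_pos (Fact.out : p.Prime).pos u
  refine sub_pow_eq_zero_of_isIdempotentElem (p := p) ?_ ?_ ?_ (hx ▸ period_le_rho hpos)
  · rw [IsIdempotentElem, Xm, AddMonoidAlgebra.single_mul_single, ← WithZero.coe_add,
      eIdem_add_eIdem hpos, mul_one]
  · rw [Xm, AddMonoidAlgebra.single_pow, one_pow, ← coe_eIdem, Xm]
  · rw [Xm, Xm, AddMonoidAlgebra.single_mul_single, mul_one, AddMonoidAlgebra.single_pow,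
      one_pow, ← hx, period_nsmul_coe_add_eIdem hpos]

end SemigroupAlgebra

theorem stmt8_general (p : ℕ) (hp : p.Prime) (S : Type*) [AddCommSemigroup S] [Fintype S]
    (hexp : ∃ t : ℕ, expS S = p ^ t)
    (R : Type*) [CommRing R] [CharP R p] :
    dd R S ≤ (Lam S : ℕ∞) - 1 := by
  have : Fact p.Prime := ⟨hp⟩
  have : Nontrivial R := CharP.nontrivial_of_char_ne_one hp.ne_one
  obtain ⟨t, ht⟩ := hexp
  have hper : ∀ x : S, period S x ∣ p ^ t :=
    ht ▸ period_dvd_expS (ht ▸ pow_ne_zero t hp.ne_zero)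
  have hpos : ∀ x : S, 0 < period S x :=
    fun x => Nat.pos_of_dvd_of_pos (hper x) (pow_pos hp.pos t)
  obtain ⟨A, hA, hLam⟩ := exists_closure_eq_top_and_Lam_eq S
  have hbot : Ideal.span ((facX R · 1) '' (A : Set S)) ^ Lam S = ⊥ := by
    rw [hLam]
    refine span_image_pow_eq_bot _ (fun a => rho S a - 1) A fun a _ => ?_
    obtain ⟨u, -, hu⟩ := (Nat.dvd_prime_pow hp).mp (hper a)
    rw [Nat.sub_add_cancel (rho_pos a)]
    exact facX_pow_rho_eq_zero p hu
  refine sSup_le ?_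
  rintro _ ⟨ℓ, rfl, s, hs⟩
  rw [← Nat.cast_one, ← ENat.natCast_sub, Nat.cast_le]
  by_contra hℓ
  refine hs 1 (fun _ => one_ne_zero) (prod_eq_zero_of_pow_eq_bot hbot ?_ fun i _ => ?_)
  · rw [Finset.card_univ, Fintype.card_fin]
    omega
  · exact facX_mem_span hpos hA (s i)

/-- `d(S,R) ≤ Λ(S) - 1` in characteristic `p`. -/
theorem stmt8 (p : ℕ) (hp : p.Prime) (S : Type*) [AddCommSemigroup S] [Fintype S] [Nonempty S]
    (hexp : ∃ t : ℕ, expS S = p ^ t)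
    (R : Type*) [CommRing R] [CharP R p] :
    dd R S ≤ (Lam S : ℕ∞) - 1 :=
  stmt8_general p hp S hexp R

end ZS
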